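/- Suppose u : 2^[n] → ℝ≥0 is a normalized, monotone set function and c : 2^[n] → ℝ≥0 is a normalized, monotone, subadditive set function. Then any permutation of [n] that lists the elements i ∈ [n] in non-decreasing order of c({i}) has objective value at most n times the minimum objective value over all permutations of [n]. -/

import Mathlib

open Finset

/-- The set of the first `k` elements of the list `L`. -/
def prefSet {n : ℕ} (L : List (Fin n)) (k : ℕ) : Finset (Fin n) := (L.take k).toFinset

/-- Marginal value `f(e|S) = f(S ∪ {e}) - f S`. -/
noncomputable def marg {n : ℕ} (f : Finset (Fin n) → ℝ) (e : Fin n) (S : Finset (Fin n)) : ℝ :=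
  f (insert e S) - f S

/-- `L` is a listing of all elements of `[n]` (a permutation of `[n]`). -/
def IsPermList {n : ℕ} (L : List (Fin n)) : Prop := L.Nodup ∧ ∀ x : Fin n, x ∈ L

/-- The objective value `∑_{i=1}^n c(S_i)(u(S_i) - u(S_{i-1}))`. -/
noncomputable def objective {n : ℕ} (u c : Finset (Fin n) → ℝ) (L : List (Fin n)) : ℝ :=
  ∑ i ∈ Finset.range L.length,
    c (prefSet L (i + 1)) * (u (prefSet L (i + 1)) - u (prefSet L i))

/-- The element in (1-indexed) position `k` of the list `L`. -/
def elemAt {n : ℕ} [NeZero n] (L : List (Fin n)) (k : ℕ) : Fin n := L.getD (k - 1) default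

/-- The quantity `b_{ij} = u(o_i | O_{i-1} ∪ L_{j-1}) - u(o_i | O_{i-1} ∪ L_{j-1} ∪ {l_j})`. -/
noncomputable def bmat {n : ℕ} [NeZero n] (u : Finset (Fin n) → ℝ) (L O : List (Fin n))
    (i j : ℕ) : ℝ :=
  marg u (elemAt O i) (prefSet O (i - 1) ∪ prefSet L (j - 1)) -
    marg u (elemAt O i) (insert (elemAt L j) (prefSet O (i - 1) ∪ prefSet L (j - 1)))

/-- Monotone set function. -/
def Mono {n : ℕ} (f : Finset (Fin n) → ℝ) : Prop :=
  ∀ S : Finset (Fin n), ∀ i : Fin n, f S ≤ f (insert i S)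

/-- Submodular set function. -/
def Submod {n : ℕ} (f : Finset (Fin n) → ℝ) : Prop :=
  ∀ S : Finset (Fin n), ∀ i j : Fin n, i ∉ S → j ∉ S →
    marg f i (insert j S) ≤ marg f i S

/-- Second-order supermodular set function. -/
def SOSupermod {n : ℕ} (f : Finset (Fin n) → ℝ) : Prop :=
  ∀ S : Finset (Fin n), ∀ i j k : Fin n, i ∉ S → j ∉ S → k ∉ S →
    marg f i (insert k S) - marg f i (insert j (insert k S)) ≤
      marg f i S - marg f i (insert j S)

/-- Objective value of a length-(n+1) pseudo-neighbor sequence, where costs are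
counted with multiplicity via the singleton costs `cs`. -/
noncomputable def pseudoObj {n : ℕ} (u : Finset (Fin n) → ℝ) (cs : Fin n → ℝ)
    (P : List (Fin n)) : ℝ :=
  ∑ k ∈ Finset.range P.length,
    (((P.take (k + 1)).map cs).sum) * (u (prefSet P (k + 1)) - u (prefSet P k))

/-- The pseudo-neighbor of `L` obtained by inserting a second copy of the element in
(1-indexed) position `i` at (1-indexed) position `j`. -/
def pseudoNeighbor {n : ℕ} [NeZero n] (L : List (Fin n)) (i j : ℕ) : List (Fin n) :=
  L.insertIdx (j - 1) (elemAt L i)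

/-- `L` is locally optimal with respect to insertions: no pseudo-neighbor has strictly
smaller objective value. -/
def LocallyOptimalInsertions {n : ℕ} [NeZero n] (u c : Finset (Fin n) → ℝ) (cs : Fin n → ℝ)
    (L : List (Fin n)) : Prop :=
  ∀ i j : ℕ, 1 ≤ j → j < i → i ≤ n →
    objective u c L ≤ pseudoObj u cs (pseudoNeighbor L i j)

/-- The list obtained from `L` by removing the element in (1-indexed) position `i` and
reinserting it at (1-indexed) position `j`. -/
def moveList {n : ℕ} [NeZero n] (L : List (Fin n)) (i j : ℕ) : List (Fin n) :=
  (L.eraseIdx (i - 1)).insertIdx (j - 1) (elemAt L i)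

/-- `L'` is a move-neighbor of `L`. -/
def IsMoveNeighbor {n : ℕ} [NeZero n] (L L' : List (Fin n)) : Prop :=
  ∃ i j : ℕ, 1 ≤ i ∧ i ≤ n ∧ 1 ≤ j ∧ j ≤ n ∧ i ≠ j ∧ L' = moveList L i j

/-!
Write `ℓ₁, …, ℓₙ` for the sorted order `L` and `Lⱼ` for its first `j` elements. Subadditivity
bounds `c(Lᵢ)` by `c{ℓ₁} + ⋯ + c{ℓᵢ}`; exchanging the order of summation, the objective value
of `L` is at most `∑ⱼ c{ℓⱼ} (u([n]) - u(Lⱼ₋₁))`. Each of these `n` terms is at most the objective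
value of any permutation `O`: let `o` be the first element of `O` outside `Lⱼ₋₁`. All elements
before `o` lie in `Lⱼ₋₁`, so `O` still has to collect at least `u([n]) - u(Lⱼ₋₁)` from `o` on,
and every set it pays for from then on contains `o`, whose singleton cost is at least `c{ℓⱼ}`
because `o ∉ Lⱼ₋₁` and `L` is sorted.
-/

theorem Mono.monotone {n : ℕ} {f : Finset (Fin n) → ℝ} (hf : Mono f) : Monotone f := by
  have grow : ∀ S D : Finset (Fin n), f S ≤ f (D ∪ S) := by
    intro S D
    induction D using Finset.induction_on with
    | empty => simp
    | insert a D _ ih => exact ih.trans (insert_union a D S ▸ hf _ a)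
  intro S T hST
  simpa [sdiff_union_of_subset hST] using grow S (T \ S)

theorem IsPermList.toFinset_eq_univ {n : ℕ} {L : List (Fin n)} (hL : IsPermList L) :
    L.toFinset = univ := by
  ext x
  simp [hL.2 x]

theorem IsPermList.length_eq {n : ℕ} {L : List (Fin n)} (hL : IsPermList L) : L.length = n := by
  rw [← List.toFinset_card_of_nodup hL.1, hL.toFinset_eq_univ, card_univ, Fintype.card_fin]

theorem List.Pairwise.apply_getElem_le_of_notMem_take {α β : Type*} [Preorder β] {f : α → β}
    {L : List α} (hs : L.Pairwise fun a b => f a ≤ f b) {x : α} (hx : x ∈ L) {j : ℕ}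
    (hj : j < L.length) (hxj : x ∉ L.take j) : f L[j] ≤ f x := by
  rw [← L.take_append_drop j, List.mem_append, L.drop_eq_getElem_cons hj] at hx
  have hs' := hs.sublist (L.drop_sublist j)
  rw [L.drop_eq_getElem_cons hj, List.pairwise_cons] at hs'
  rcases List.mem_cons.1 (hx.resolve_left hxj) with rfl | hx
  · exact le_rfl
  · exact hs'.1 x hx

section prefSet

variable {n : ℕ} (L : List (Fin n))

theorem prefSet_zero : prefSet L 0 = ∅ := by
  simp [prefSet]

theorem prefSet_length : prefSet L L.length = L.toFinset := by
  simp [prefSet]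

theorem prefSet_mono : Monotone (prefSet L) := fun _ _ h x => by
  simpa [prefSet] using fun hx => L.take_subset_take_left h hx

theorem prefSet_succ {i : ℕ} (hi : i < L.length) :
    prefSet L (i + 1) = insert L[i] (prefSet L i) := by
  ext x
  simp only [prefSet, List.take_add_one, List.getElem?_eq_getElem hi, List.mem_toFinset,
    mem_insert, List.mem_append, Option.mem_toList, Option.some.injEq]
  tauto

theorem getElem_notMem_prefSet (hL : L.Nodup) {j : ℕ} (hj : j < L.length) :
    L[j] ∉ prefSet L j := fun h =>
  List.disjoint_take_drop hL le_rfl (List.mem_toFinset.1 h)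
    (L.drop_eq_getElem_cons hj ▸ List.mem_cons_self)

theorem exists_prefSet_subset_getElem_notMem (S : Finset (Fin n)) {x : Fin n} (hxL : x ∈ L)
    (hxS : x ∉ S) : ∃ (k : ℕ) (hk : k < L.length), prefSet L k ⊆ S ∧ L[k] ∉ S := by
  have hk : L.findIdx (· ∉ S) < L.length :=
    List.findIdx_lt_length_of_exists ⟨x, hxL, by simpa using hxS⟩
  refine ⟨_, hk, fun y hy => ?_, by simpa using List.findIdx_getElem (w := hk)⟩
  simpa using List.false_of_mem_take_findIdx (List.mem_toFinset.1 hy)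

end prefSet

section objective

variable {n : ℕ} {u c : Finset (Fin n) → ℝ}

theorem Mono.sub_prefSet_succ_nonneg (hu : Mono u) (L : List (Fin n)) (i : ℕ) :
    0 ≤ u (prefSet L (i + 1)) - u (prefSet L i) :=
  sub_nonneg.2 (hu.monotone (prefSet_mono L i.le_succ))

theorem singleton_cost_mul_tail_le_objective (hu : Mono u) (hc_nonneg : ∀ S, 0 ≤ c S)
    (hc : Mono c) (L : List (Fin n)) {k : ℕ} (hk : k < L.length) :
    c {L[k]} * (u L.toFinset - u (prefSet L k)) ≤ objective u c L := by
  calc c {L[k]} * (u L.toFinset - u (prefSet L k))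
      = ∑ i ∈ Ico k L.length, c {L[k]} * (u (prefSet L (i + 1)) - u (prefSet L i)) := by
        rw [← mul_sum, sum_Ico_sub (fun i => u (prefSet L i)) hk.le, prefSet_length]
    _ ≤ ∑ i ∈ Ico k L.length,
          c (prefSet L (i + 1)) * (u (prefSet L (i + 1)) - u (prefSet L i)) := by
        refine sum_le_sum fun i hi =>
          mul_le_mul_of_nonneg_right ?_ (hu.sub_prefSet_succ_nonneg L i)
        exact hc.monotone <| singleton_subset_iff.2 <| prefSet_mono L
          (Nat.succ_le_succ (mem_Ico.1 hi).1) (prefSet_succ L hk ▸ mem_insert_self _ _)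
    _ ≤ objective u c L :=
        sum_le_sum_of_subset_of_nonneg (fun i hi => mem_range.2 (mem_Ico.1 hi).2) fun i _ _ =>
          mul_nonneg (hc_nonneg _) (hu.sub_prefSet_succ_nonneg L i)

theorem singleton_cost_mul_residual_le_objective (hu : Mono u) (hc_nonneg : ∀ S, 0 ≤ c S)
    (hc : Mono c) {L O : List (Fin n)} (hL : IsPermList L) (hO : IsPermList O)
    (hsorted : L.Pairwise fun a b => c {a} ≤ c {b}) {j : ℕ} (hj : j < L.length) :
    c {L[j]} * (u univ - u (prefSet L j)) ≤ objective u c O := by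
  obtain ⟨k, hk, hOk, hkL⟩ :=
    exists_prefSet_subset_getElem_notMem O _ (hO.2 _) (getElem_notMem_prefSet L hL.1 hj)
  have hcost : c {L[j]} ≤ c {O[k]} :=
    hsorted.apply_getElem_le_of_notMem_take (hL.2 _) hj (by simpa [prefSet] using hkL)
  calc c {L[j]} * (u univ - u (prefSet L j))
      ≤ c {O[k]} * (u univ - u (prefSet O k)) :=
        mul_le_mul hcost (by linarith [hu.monotone hOk])
          (sub_nonneg.2 (hu.monotone (subset_univ _))) (hc_nonneg _)
    _ ≤ objective u c O :=
        hO.toFinset_eq_univ ▸ singleton_cost_mul_tail_le_objective hu hc_nonneg hc O hk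

variable [NeZero n]

theorem cost_prefSet_succ_le_sum_singleton (hc : ∀ S T, c (S ∪ T) ≤ c S + c T)
    (L : List (Fin n)) : ∀ i < L.length,
    c (prefSet L (i + 1)) ≤ ∑ j ∈ range (i + 1), c {L.getD j default}
  | 0, h => by simp [prefSet_succ L h, prefSet_zero, ← List.getD_eq_getElem _ default h]
  | i + 1, h => by
    rw [prefSet_succ L h, insert_eq, sum_range_succ, List.getD_eq_getElem _ _ h]
    linarith [hc {L[i + 1]} (prefSet L (i + 1)),
      cost_prefSet_succ_le_sum_singleton hc L i (by omega)]

theorem objective_le_sum_singleton_cost_mul_residual (hu : Mono u)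
    (hc : ∀ S T, c (S ∪ T) ≤ c S + c T) (L : List (Fin n)) :
    objective u c L ≤
      ∑ j ∈ range L.length, c {L.getD j default} * (u L.toFinset - u (prefSet L j)) := by
  calc objective u c L
      ≤ ∑ i ∈ range L.length, ∑ j ∈ range (i + 1),
          c {L.getD j default} * (u (prefSet L (i + 1)) - u (prefSet L i)) := by
        refine sum_le_sum fun i hi => ?_
        rw [← sum_mul]
        exact mul_le_mul_of_nonneg_right
          (cost_prefSet_succ_le_sum_singleton hc L i (mem_range.1 hi))
          (hu.sub_prefSet_succ_nonneg L i)
    _ = ∑ j ∈ range L.length, ∑ i ∈ Ico j L.length,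
          c {L.getD j default} * (u (prefSet L (i + 1)) - u (prefSet L i)) := by
        simp only [range_eq_Ico]
        exact (sum_Ico_Ico_comm 0 L.length _).symm
    _ = _ := by
        refine sum_congr rfl fun j hj => ?_
        rw [← mul_sum, sum_Ico_sub (fun i => u (prefSet L i)) (mem_range.1 hj).le, prefSet_length]

end objective

theorem nondecreasing_cost_n_approx_subadditive_general (n : ℕ) [NeZero n]
    (u c : Finset (Fin n) → ℝ)
    (hu_mono : Mono u)
    (hc_nonneg : ∀ S, 0 ≤ c S) (hc_mono : Mono c)
    (hc_subadd : ∀ S T : Finset (Fin n), c (S ∪ T) ≤ c S + c T)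
    (L : List (Fin n)) (hL : IsPermList L)
    (hsorted : L.Pairwise (fun a b => c {a} ≤ c {b})) :
    ∀ O, IsPermList O → objective u c L ≤ n * objective u c O := by
  intro O hO
  calc objective u c L
      ≤ ∑ j ∈ range L.length, c {L.getD j default} * (u univ - u (prefSet L j)) :=
        hL.toFinset_eq_univ ▸ objective_le_sum_singleton_cost_mul_residual hu_mono hc_subadd L
    _ ≤ ∑ _j ∈ range L.length, objective u c O := sum_le_sum fun j hj => by
        rw [List.getD_eq_getElem _ _ (mem_range.1 hj)]
        exact singleton_cost_mul_residual_le_objective hu_mono hc_nonneg hc_mono hL hO hsorted _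
    _ = n * objective u c O := by simp [hL.length_eq]

theorem nondecreasing_cost_n_approx_subadditive (n : ℕ) [NeZero n]
    (u c : Finset (Fin n) → ℝ)
    (hu0 : u ∅ = 0) (hu_nonneg : ∀ S, 0 ≤ u S) (hu_mono : Mono u)
    (hc0 : c ∅ = 0) (hc_nonneg : ∀ S, 0 ≤ c S) (hc_mono : Mono c)
    (hc_subadd : ∀ S T : Finset (Fin n), c (S ∪ T) ≤ c S + c T)
    (L : List (Fin n)) (hL : IsPermList L)
    (hsorted : L.Pairwise (fun a b => c {a} ≤ c {b})) :
    ∀ O, IsPermList O → objective u c L ≤ n * objective u c O :=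
  nondecreasing_cost_n_approx_subadditive_general n u c hu_mono hc_nonneg hc_mono hc_subadd L hL
    hsorted
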